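/- arXiv:2406.13798 — 3 statements merged into one kernel-verified Lean document; each statement's English description precedes it below -/
import Mathlib

section
/- Let E be a finite-dimensional real inner product space, M : E → E a self-adjoint linear operator, and Q ⊆ E a closed convex cone with nonempty interior. Assume that ⟨u, M u⟩ > 0 for every u in the boundary of Q with u ≠ 0. Then exactly one of the following two assertions holds: (1) ⟨u, M u⟩ > 0 for every u in the interior of Q; (2) there exist a vector v in the interior of −Q and a scalar λ ≥ 0 such that M v = −λ v and M v ∈ Q. -/
open scoped RealInnerProductSpace

/-- Lemma of alternative choices on cones.
Let `E` be a finite-dimensional real inner product space, `M : E → E` a self-adjoint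
linear operator, and `Q ⊆ E` a closed convex cone with nonempty interior.  Assume
`⟪u, M u⟫ > 0` for every nonzero `u` in the boundary of `Q`.  Then exactly one of the
following holds: (1) `⟪u, M u⟫ > 0` for every `u ∈ int Q`; (2) there exist
`v ∈ int (−Q)` and `λ ≥ 0` with `M v = −λ • v` and `M v ∈ Q`. -/
theorem lemma_of_alternatives_on_cones
    {E : Type*} [NormedAddCommGroup E] [InnerProductSpace ℝ E] [FiniteDimensional ℝ E]
    (M : E →ₗ[ℝ] E) (hM : ∀ x y : E, ⟪M x, y⟫ = ⟪x, M y⟫)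
    (Q : Set E) (hQclosed : IsClosed Q) (hQconvex : Convex ℝ Q)
    (hQcone : ∀ c : ℝ, 0 ≤ c → ∀ u ∈ Q, c • u ∈ Q)
    (hQint : (interior Q).Nonempty)
    (hbdry : ∀ u ∈ frontier Q, u ≠ 0 → 0 < ⟪u, M u⟫) :
    Xor' (∀ u ∈ interior Q, 0 < ⟪u, M u⟫)
      (∃ v ∈ interior (-Q), ∃ l : ℝ, 0 ≤ l ∧ M v = -(l • v) ∧ M v ∈ Q) := by
  classical
  set T : E →L[ℝ] E := LinearMap.toContinuousLinearMap M with hTdef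
  have hTapp : ∀ x, T x = M x := fun x => rfl
  have hTsa : IsSelfAdjoint T := by
    rw [ContinuousLinearMap.isSelfAdjoint_iff_isSymmetric]
    intro x y; exact hM x y
  have h0Q : (0 : E) ∈ Q := by
    obtain ⟨u, hu⟩ := hQint
    simpa using hQcone 0 le_rfl u (interior_subset hu)
  have hIneg : interior (-Q) = -interior Q := by
    have hpre : ∀ s : Set E, -s = (Homeomorph.neg E) ⁻¹' s := by
      intro s; ext x; simp [Set.mem_neg]
    rw [hpre Q, hpre (interior Q), ← Homeomorph.preimage_interior]
  by_cases hP : ∀ u ∈ interior Q, 0 < ⟪u, M u⟫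
  · refine Or.inl ⟨hP, ?_⟩
    rintro ⟨v, hv, l, hl, hMv, -⟩
    have hvQ : -v ∈ interior Q := by
      rw [hIneg] at hv; simpa [Set.mem_neg] using hv
    have h1 : 0 < ⟪-v, M (-v)⟫ := hP _ hvQ
    have h2 : ⟪-v, M (-v)⟫ = ⟪v, M v⟫ := by
      rw [map_neg, inner_neg_neg]
    rw [h2, hMv, inner_neg_right, inner_smul_right] at h1
    have h3 : 0 ≤ l * ⟪v, v⟫ := mul_nonneg hl real_inner_self_nonneg
    linarith
  · push_neg at hP
    obtain ⟨u₀, hu₀, hu₀f⟩ := hP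
    have hP' : ¬ ∀ u ∈ interior Q, 0 < ⟪u, M u⟫ := by
      push_neg; exact ⟨u₀, hu₀, hu₀f⟩
    by_cases h0 : (0 : E) ∈ interior Q
    · refine Or.inr ⟨⟨0, ?_, 0, le_rfl, by simp, by simpa using h0Q⟩, hP'⟩
      rw [hIneg]
      simpa [Set.mem_neg] using h0
    · have hu₀ne : u₀ ≠ 0 := fun h => h0 (h ▸ hu₀)
      have hu₀norm : (0 : ℝ) < ‖u₀‖ := norm_pos_iff.mpr hu₀ne
      set K : Set E := Q ∩ Metric.sphere (0 : E) 1 with hKdef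
      have hKcpt : IsCompact K := (isCompact_sphere (0 : E) 1).inter_left hQclosed
      set w₀ : E := ‖u₀‖⁻¹ • u₀ with hw₀def
      have hw₀Q : w₀ ∈ Q := hQcone _ (inv_nonneg.mpr hu₀norm.le) _ (interior_subset hu₀)
      have hw₀s : w₀ ∈ Metric.sphere (0 : E) 1 := by
        simp [hw₀def, norm_smul, abs_of_nonneg (inv_nonneg.mpr hu₀norm.le),
          inv_mul_cancel₀ hu₀norm.ne']
      have hw₀f : ⟪w₀, M w₀⟫ ≤ 0 := by
        rw [hw₀def, map_smul, inner_smul_left, inner_smul_right]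
        have : (0:ℝ) ≤ ‖u₀‖⁻¹ * ‖u₀‖⁻¹ := by positivity
        simp only [RCLike.conj_to_real]
        nlinarith
      have hfc : Continuous fun u : E => ⟪u, M u⟫ :=
        continuous_id.inner T.continuous
      obtain ⟨w, hwK, hwmin⟩ :=
        hKcpt.exists_isMinOn ⟨w₀, hw₀Q, hw₀s⟩ hfc.continuousOn
      have hw1 : ‖w‖ = 1 := by simpa using hwK.2
      have hwne : w ≠ 0 := by
        intro h; rw [h] at hw1; simp at hw1
      have hwf : ⟪w, M w⟫ ≤ 0 := le_trans (hwmin ⟨hw₀Q, hw₀s⟩) hw₀f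
      have hwint : w ∈ interior Q := by
        by_contra hwi
        have hwfr : w ∈ frontier Q := by
          rw [hQclosed.frontier_eq]
          exact ⟨hwK.1, hwi⟩
        exact absurd (hbdry w hwfr hwne) (not_lt.mpr hwf)
      -- local minimum on the sphere
      have hre : ∀ x : E, T.reApplyInnerSelf x = ⟪x, M x⟫ := by
        intro x
        rw [ContinuousLinearMap.reApplyInnerSelf_apply]
        simp [hTapp, real_inner_comm]
      have hextr : IsLocalMinOn T.reApplyInnerSelf (Metric.sphere (0 : E) ‖w‖) w := by
        have hmem : ∀ᶠ x in nhdsWithin w (Metric.sphere (0 : E) ‖w‖), x ∈ Q :=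
          eventually_nhdsWithin_of_eventually_nhds
            (Filter.eventually_of_mem (mem_interior_iff_mem_nhds.mp hwint)
              (fun x hx => hx))
        filter_upwards [hmem, self_mem_nhdsWithin] with x hxQ hxs
        rw [hre, hre]
        exact hwmin ⟨hxQ, by simpa [hw1] using hxs⟩
      have heig : T w = T.rayleighQuotient w • w :=
        hTsa.eq_smul_self_of_isLocalExtrOn_real (Or.inl hextr)
      have hray : T.rayleighQuotient w = ⟪w, M w⟫ := by
        rw [ContinuousLinearMap.rayleighQuotient, hre, hw1]
        norm_num
      set m : ℝ := ⟪w, M w⟫ with hmdef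
      have hMw : M w = m • w := by rw [← hTapp, heig, hray]
      refine Or.inr ⟨⟨-w, ?_, -m, by linarith, ?_, ?_⟩, hP'⟩
      · rw [hIneg]
        simpa [Set.mem_neg] using hwint
      · rw [map_neg, hMw]
        simp [smul_smul]
      · rw [map_neg, hMw, ← neg_smul]
        exact hQcone _ (by linarith) _ hwK.1
end

section
/- Let M be an invertible symmetric real l×l matrix and K ⊆ ℝ^l a closed convex cone. Then M is positive definite if and only if both ⟨d, M d⟩ > 0 for every d ∈ K with d ≠ 0 and ⟨d, M⁻¹ d⟩ > 0 for every d ∈ K∘ with d ≠ 0. -/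
open scoped Matrix

private lemma cont_dot {l : ℕ} : Continuous fun u : Fin l → ℝ => u ⬝ᵥ u := by
  simp only [dotProduct]
  exact continuous_finset_sum _ fun i _ => (continuous_apply i).mul (continuous_apply i)

private lemma cont_quad {l : ℕ} (A : Matrix (Fin l) (Fin l) ℝ) :
    Continuous fun u : Fin l → ℝ => u ⬝ᵥ A *ᵥ u := by
  simp only [dotProduct, Matrix.mulVec]
  exact continuous_finset_sum _ fun i _ =>
    (continuous_apply i).mul (continuous_finset_sum _ fun j _ =>
      continuous_const.mul (continuous_apply j))

private lemma cont_lin {l : ℕ} (b : Fin l → ℝ) : Continuous fun u : Fin l → ℝ => b ⬝ᵥ u := by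
  simp only [dotProduct]
  exact continuous_finset_sum _ fun i _ => continuous_const.mul (continuous_apply i)

private lemma dot_self_nonneg {l : ℕ} (u : Fin l → ℝ) : 0 ≤ u ⬝ᵥ u :=
  Finset.sum_nonneg fun i _ => mul_self_nonneg _

private lemma dot_self_pos {l : ℕ} {u : Fin l → ℝ} (hu : u ≠ 0) : 0 < u ⬝ᵥ u :=
  lt_of_le_of_ne (dot_self_nonneg u) (Ne.symm (fun h => hu (dotProduct_self_eq_zero.mp h)))

private lemma normsq_le_dot {l : ℕ} (u : Fin l → ℝ) : ‖u‖ ^ 2 ≤ u ⬝ᵥ u := by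
  have h1 : ‖u‖ ≤ Real.sqrt (u ⬝ᵥ u) := by
    refine (pi_norm_le_iff_of_nonneg (Real.sqrt_nonneg _)).2 fun i => ?_
    refine Real.abs_le_sqrt ?_
    have := Finset.single_le_sum (f := fun j => u j * u j)
      (fun j _ => mul_self_nonneg _) (Finset.mem_univ i)
    simpa [dotProduct, sq] using this
  calc ‖u‖ ^ 2 ≤ Real.sqrt (u ⬝ᵥ u) ^ 2 := by
        exact pow_le_pow_left₀ (norm_nonneg _) h1 2
    _ = u ⬝ᵥ u := Real.sq_sqrt (dot_self_nonneg u)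

private lemma dot_symm {l : ℕ} {M : Matrix (Fin l) (Fin l) ℝ} (hsymm : M.IsSymm)
    (u v : Fin l → ℝ) : u ⬝ᵥ M *ᵥ v = v ⬝ᵥ M *ᵥ u := by
  rw [Matrix.dotProduct_mulVec, ← Matrix.mulVec_transpose, hsymm.eq, dotProduct_comm]

private lemma exists_alpha {l : ℕ} {M : Matrix (Fin l) (Fin l) ℝ}
    {K : Set (Fin l → ℝ)} (hKclosed : IsClosed K)
    (hKcone : ∀ c : ℝ, 0 ≤ c → ∀ d ∈ K, c • d ∈ K)
    (h1 : ∀ d ∈ K, d ≠ 0 → 0 < d ⬝ᵥ M.mulVec d) :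
    ∃ α : ℝ, 0 < α ∧ ∀ u ∈ K, α * (u ⬝ᵥ u) ≤ u ⬝ᵥ M *ᵥ u := by
  classical
  set S : Set (Fin l → ℝ) := {u | u ∈ K ∧ u ⬝ᵥ u = 1} with hS
  have hScl : IsClosed S := hKclosed.inter (isClosed_eq cont_dot continuous_const)
  have hSsub : S ⊆ Metric.closedBall 0 1 := by
    intro u hu
    rw [Metric.mem_closedBall, dist_zero_right]
    have h2 := normsq_le_dot u
    rw [hu.2] at h2
    nlinarith [norm_nonneg u]
  have hScomp : IsCompact S :=
    (isCompact_closedBall (0 : Fin l → ℝ) 1).of_isClosed_subset hScl hSsub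
  -- scaling: any nonzero u ∈ K scales into S
  have hscale : ∀ u ∈ K, u ≠ 0 → (Real.sqrt (u ⬝ᵥ u))⁻¹ • u ∈ S := by
    intro u huK hu
    have hQ : 0 < u ⬝ᵥ u := dot_self_pos hu
    have hs : 0 < Real.sqrt (u ⬝ᵥ u) := Real.sqrt_pos.2 hQ
    refine ⟨hKcone _ (inv_nonneg.2 hs.le) u huK, ?_⟩
    have : ((Real.sqrt (u ⬝ᵥ u))⁻¹ • u) ⬝ᵥ ((Real.sqrt (u ⬝ᵥ u))⁻¹ • u)
        = (Real.sqrt (u ⬝ᵥ u))⁻¹ * ((Real.sqrt (u ⬝ᵥ u))⁻¹ * (u ⬝ᵥ u)) := by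
      simp [smul_dotProduct, dotProduct_smul, smul_eq_mul]
    rw [this]
    have hsq : Real.sqrt (u ⬝ᵥ u) * Real.sqrt (u ⬝ᵥ u) = u ⬝ᵥ u :=
      Real.mul_self_sqrt hQ.le
    have h5 : (Real.sqrt (u ⬝ᵥ u))⁻¹ * ((Real.sqrt (u ⬝ᵥ u))⁻¹ * (u ⬝ᵥ u))
        = (u ⬝ᵥ u) / (Real.sqrt (u ⬝ᵥ u) * Real.sqrt (u ⬝ᵥ u)) := by ring
    rw [h5, hsq, div_self hQ.ne']
  by_cases hSne : S.Nonempty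
  · obtain ⟨u₀, hu₀, hmin⟩ := hScomp.exists_isMinOn hSne (cont_quad M).continuousOn
    have hu₀ne : u₀ ≠ 0 := by
      intro h
      rw [h] at hu₀
      simp [hS] at hu₀
    refine ⟨u₀ ⬝ᵥ M *ᵥ u₀, h1 u₀ hu₀.1 hu₀ne, ?_⟩
    intro u huK
    by_cases hu : u = 0
    · simp [hu]
    · have hQ : 0 < u ⬝ᵥ u := dot_self_pos hu
      have hs : 0 < Real.sqrt (u ⬝ᵥ u) := Real.sqrt_pos.2 hQ
      have hmem := hscale u huK hu
      have hle := (isMinOn_iff.mp hmin) _ hmem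
      have hval : ((Real.sqrt (u ⬝ᵥ u))⁻¹ • u) ⬝ᵥ M *ᵥ ((Real.sqrt (u ⬝ᵥ u))⁻¹ • u)
          = (Real.sqrt (u ⬝ᵥ u))⁻¹ * ((Real.sqrt (u ⬝ᵥ u))⁻¹ * (u ⬝ᵥ M *ᵥ u)) := by
        simp [smul_dotProduct, dotProduct_smul, Matrix.mulVec_smul, smul_eq_mul]
      rw [hval] at hle
      have hsq : Real.sqrt (u ⬝ᵥ u) * Real.sqrt (u ⬝ᵥ u) = u ⬝ᵥ u :=
        Real.mul_self_sqrt hQ.le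
      have hc2 : (Real.sqrt (u ⬝ᵥ u))⁻¹ * ((Real.sqrt (u ⬝ᵥ u))⁻¹ * (u ⬝ᵥ u)) = 1 := by
        have h5 : (Real.sqrt (u ⬝ᵥ u))⁻¹ * ((Real.sqrt (u ⬝ᵥ u))⁻¹ * (u ⬝ᵥ u))
            = (u ⬝ᵥ u) / (Real.sqrt (u ⬝ᵥ u) * Real.sqrt (u ⬝ᵥ u)) := by ring
        rw [h5, hsq, div_self hQ.ne']
      have h3 := mul_le_mul_of_nonneg_right hle hQ.le
      have h4 : ((Real.sqrt (u ⬝ᵥ u))⁻¹ * ((Real.sqrt (u ⬝ᵥ u))⁻¹ * (u ⬝ᵥ M *ᵥ u))) * (u ⬝ᵥ u)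
          = ((Real.sqrt (u ⬝ᵥ u))⁻¹ * ((Real.sqrt (u ⬝ᵥ u))⁻¹ * (u ⬝ᵥ u))) * (u ⬝ᵥ M *ᵥ u) := by
        ring
      rw [h4, hc2, one_mul] at h3
      exact h3
  · refine ⟨1, one_pos, ?_⟩
    intro u huK
    by_cases hu : u = 0
    · simp [hu]
    · exact absurd ⟨_, hscale u huK hu⟩ hSne

/-- Characterization of positive definiteness via a cone and its polar.
Let `M` be an invertible symmetric real `l×l` matrix and `K ⊆ ℝ^l` a closed convex cone.
Then `M` is positive definite iff `⟪d, M d⟫ > 0` for every nonzero `d ∈ K` and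
`⟪d, M⁻¹ d⟫ > 0` for every nonzero `d` in the polar cone `K∘`. -/
theorem posDef_iff_cone_and_polar {l : ℕ}
    (M : Matrix (Fin l) (Fin l) ℝ) (hsymm : M.IsSymm) (hinv : IsUnit M.det)
    (K : Set (Fin l → ℝ)) (hKclosed : IsClosed K) (hKconvex : Convex ℝ K)
    (hKcone : ∀ c : ℝ, 0 ≤ c → ∀ d ∈ K, c • d ∈ K) :
    M.PosDef ↔
      ((∀ d ∈ K, d ≠ 0 → 0 < d ⬝ᵥ M.mulVec d) ∧
        ∀ d ∈ {d' : Fin l → ℝ | ∀ d'' ∈ K, d' ⬝ᵥ d'' ≤ 0}, d ≠ 0 →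
          0 < d ⬝ᵥ M⁻¹.mulVec d) := by
  classical
  have hherm : M.IsHermitian := by
    rw [Matrix.IsHermitian, Matrix.conjTranspose_eq_transpose_of_trivial]
    exact hsymm
  constructor
  · intro hpd
    refine ⟨fun d _ hd => ?_, fun d _ hd => ?_⟩
    · simpa using hpd.dotProduct_mulVec_pos hd
    · simpa using hpd.inv.dotProduct_mulVec_pos hd
  · rintro ⟨h1, h2⟩
    by_cases hKne : K.Nonempty
    · -- main case
      have h0K : (0 : Fin l → ℝ) ∈ K := by
        obtain ⟨d, hd⟩ := hKne
        simpa using hKcone 0 le_rfl d hd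
      obtain ⟨α, hα, halpha⟩ := exists_alpha hKclosed hKcone h1
      refine Matrix.PosDef.of_dotProduct_mulVec_pos hherm ?_
      intro x hx
      have hmain : 0 < x ⬝ᵥ M *ᵥ x := by
        set b : Fin l → ℝ := M *ᵥ x with hb
        set f : (Fin l → ℝ) → ℝ := fun w => w ⬝ᵥ M *ᵥ w - 2 * (b ⬝ᵥ w) with hf
        have hfc : Continuous f := (cont_quad M).sub (continuous_const.mul (cont_lin b))
        have hbb : 0 ≤ b ⬝ᵥ b := dot_self_nonneg b
        -- AM-GM type bound
        have hbw : ∀ w : Fin l → ℝ, α * (b ⬝ᵥ w) ≤ b ⬝ᵥ b + α ^ 2 / 4 * (w ⬝ᵥ w) := by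
          intro w
          simp only [dotProduct, Finset.mul_sum, ← Finset.sum_add_distrib]
          exact Finset.sum_le_sum fun i _ => by nlinarith [sq_nonneg (b i - α / 2 * w i)]
        -- coercivity on K
        have hcoer : ∀ w ∈ K, 4 * (b ⬝ᵥ b) / α ^ 2 < w ⬝ᵥ w → 0 < f w := by
          intro w hw hQw
          have hMw := halpha w hw
          have hbw' := hbw w
          have hQw' : 4 * (b ⬝ᵥ b) < α ^ 2 * (w ⬝ᵥ w) := by
            rw [div_lt_iff₀ (by positivity)] at hQw
            linarith [hQw]
          have h20 : 0 < α * f w := by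
            simp only [hf]
            nlinarith [mul_le_mul_of_nonneg_left hMw hα.le]
          nlinarith [h20]
        -- minimize f over a large compact piece of K
        set R : ℝ := Real.sqrt (4 * (b ⬝ᵥ b) / α ^ 2) + 1 with hR
        have hR0 : 0 ≤ R := by positivity
        set T : Set (Fin l → ℝ) := K ∩ Metric.closedBall 0 R with hT
        have hTcomp : IsCompact T :=
          (isCompact_closedBall (0 : Fin l → ℝ) R).of_isClosed_subset
            (hKclosed.inter Metric.isClosed_closedBall) Set.inter_subset_right
        have h0T : (0 : Fin l → ℝ) ∈ T := ⟨h0K, Metric.mem_closedBall_self hR0⟩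
        obtain ⟨u, huT, hminT⟩ := hTcomp.exists_isMinOn ⟨0, h0T⟩ hfc.continuousOn
        obtain ⟨huK, -⟩ := huT
        have hf0 : f 0 = 0 := by simp [hf]
        have hfu0 : f u ≤ 0 := by
          have h21 := (isMinOn_iff.mp hminT) 0 h0T
          rwa [hf0] at h21
        -- global minimality over K
        have hglob : ∀ w ∈ K, f u ≤ f w := by
          intro w hw
          by_cases hwB : w ∈ Metric.closedBall (0 : Fin l → ℝ) R
          · exact (isMinOn_iff.mp hminT) w ⟨hw, hwB⟩
          · refine hfu0.trans (hcoer w hw ?_).le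
            have hnw : R < ‖w‖ := by
              have h22 := hwB
              simp only [Metric.mem_closedBall, dist_zero_right, not_le] at h22
              exact h22
            have h6 : R ^ 2 < ‖w‖ ^ 2 := by nlinarith [hnw, hR0]
            have h7 := normsq_le_dot w
            have h8 : 4 * (b ⬝ᵥ b) / α ^ 2 ≤ R ^ 2 := by
              have h9 : Real.sqrt (4 * (b ⬝ᵥ b) / α ^ 2) ^ 2 = 4 * (b ⬝ᵥ b) / α ^ 2 :=
                Real.sq_sqrt (by positivity)
              nlinarith [Real.sqrt_nonneg (4 * (b ⬝ᵥ b) / α ^ 2)]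
            exact lt_of_le_of_lt h8 (lt_of_lt_of_le h6 h7)
        -- first-order conditions at the minimizer
        set v : Fin l → ℝ := b - M *ᵥ u with hv
        have hfo : ∀ w ∈ K, v ⬝ᵥ w ≤ v ⬝ᵥ u := by
          intro w hw
          set d : Fin l → ℝ := w - u with hd
          have hexp : ∀ t : ℝ, f (u + t • d)
              = f u + 2 * t * ((u ⬝ᵥ M *ᵥ d) - b ⬝ᵥ d) + t ^ 2 * (d ⬝ᵥ M *ᵥ d) := by
            intro t
            have hsd := dot_symm hsymm d u
            simp only [hf, Matrix.mulVec_add, Matrix.mulVec_smul, dotProduct_add,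
              add_dotProduct, dotProduct_smul, smul_dotProduct,
              smul_eq_mul]
            rw [hsd]
            ring
          have hmem : ∀ t : ℝ, 0 ≤ t → t ≤ 1 → u + t • d ∈ K := by
            intro t ht0 ht1
            have h23 := hKconvex huK hw (by linarith : (0:ℝ) ≤ 1 - t) ht0 (by ring)
            have heq : u + t • d = (1 - t) • u + t • w := by
              funext i
              simp only [hd, Pi.add_apply, Pi.smul_apply, Pi.sub_apply, smul_eq_mul]
              ring
            rwa [heq]
          have hA : 0 ≤ (u ⬝ᵥ M *ᵥ d) - b ⬝ᵥ d := by
            by_contra hA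
            push_neg at hA
            set A : ℝ := (u ⬝ᵥ M *ᵥ d) - b ⬝ᵥ d with hAdef
            set C : ℝ := d ⬝ᵥ M *ᵥ d with hCdef
            by_cases hC : C ≤ 0
            · have h10 := hglob (u + (1:ℝ) • d) (hmem 1 zero_le_one le_rfl)
              rw [hexp 1] at h10
              nlinarith [h10, hA, hC]
            · push_neg at hC
              have hnA : 0 < -A := by linarith
              set t : ℝ := min 1 (-A / C) with ht
              have htpos : 0 < t := lt_min one_pos (by positivity)
              have ht1 : t ≤ 1 := min_le_left _ _
              have htC : t * C ≤ -A := by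
                have h24 := min_le_right 1 (-A / C)
                have h25 : t * C ≤ (-A / C) * C := by nlinarith [h24, hC]
                have h26 : (-A / C) * C = -A := by field_simp
                linarith
              have h10 := hglob (u + t • d) (hmem t htpos.le ht1)
              rw [hexp t] at h10
              nlinarith [h10, htpos, htC, hA]
          have hcomm : (M *ᵥ u) ⬝ᵥ d = u ⬝ᵥ M *ᵥ d := by
            rw [dotProduct_comm]
            exact dot_symm hsymm d u
          have hvd : v ⬝ᵥ d ≤ 0 := by
            rw [hv, sub_dotProduct, hcomm]
            linarith
          have h27 : v ⬝ᵥ w - v ⬝ᵥ u = v ⬝ᵥ d := by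
            rw [hd, dotProduct_sub]
          linarith
        have hvu0 : v ⬝ᵥ u = 0 := by
          have h11 := hfo 0 h0K
          have h12 := hfo ((2:ℝ) • u) (hKcone 2 (by norm_num) u huK)
          simp only [dotProduct_zero, dotProduct_smul, smul_eq_mul] at h11 h12
          linarith
        have hpolar : v ∈ {d' : Fin l → ℝ | ∀ d'' ∈ K, d' ⬝ᵥ d'' ≤ 0} := by
          intro w hw
          have := hfo w hw
          linarith
        -- decomposition identity
        have hveq : v = M *ᵥ (x - u) := by rw [hv, hb, Matrix.mulVec_sub]
        have hMinvv : M⁻¹ *ᵥ v = x - u := by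
          rw [hveq, Matrix.mulVec_mulVec, Matrix.nonsing_inv_mul M hinv, Matrix.one_mulVec]
        have hvxu : v ⬝ᵥ M⁻¹ *ᵥ v = (x - u) ⬝ᵥ M *ᵥ (x - u) := by
          rw [hMinvv, hveq, dotProduct_comm]
        have h13 : v ⬝ᵥ u = u ⬝ᵥ M *ᵥ (x - u) := by
          rw [hveq, dotProduct_comm]
        have hcross : u ⬝ᵥ M *ᵥ (x - u) = 0 := h13.symm.trans hvu0
        have hcross2 : (x - u) ⬝ᵥ M *ᵥ u = 0 := by
          rw [dot_symm hsymm (x - u) u]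
          exact hcross
        have hx' : u + (x - u) = x := by abel
        have hkey : x ⬝ᵥ M *ᵥ x = u ⬝ᵥ M *ᵥ u + v ⬝ᵥ M⁻¹ *ᵥ v := by
          conv_lhs => rw [← hx']
          rw [Matrix.mulVec_add, dotProduct_add, add_dotProduct,
            add_dotProduct, hcross, hcross2, hvxu]
          ring
        rw [hkey]
        rcases eq_or_ne u 0 with hu0 | hu0
        · have hvne : v ≠ 0 := by
            intro hv0
            have h17 : x - u = 0 := by rw [← hMinvv, hv0, Matrix.mulVec_zero]
            rw [sub_eq_zero] at h17
            exact hx (h17.trans hu0)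
          have h18 : u ⬝ᵥ M *ᵥ u = 0 := by simp [hu0]
          have h14 := h2 v hpolar hvne
          rw [h18]
          simpa using h14
        · have h15 := h1 u huK hu0
          rcases eq_or_ne v 0 with hv0 | hv0
          · have h19 : v ⬝ᵥ M⁻¹ *ᵥ v = 0 := by simp [hv0]
            rw [h19]
            linarith
          · have h16 := h2 v hpolar hv0
            have h16' : 0 < v ⬝ᵥ M⁻¹ *ᵥ v := h16
            linarith
      simpa using hmain
    · -- K empty : M⁻¹ is positive definite, hence M is
      have hMinv : M⁻¹.PosDef := by
        refine Matrix.PosDef.of_dotProduct_mulVec_pos ?_ ?_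
        · rw [Matrix.IsHermitian, Matrix.conjTranspose_eq_transpose_of_trivial,
            Matrix.transpose_nonsing_inv, hsymm.eq]
        · intro y hy
          have hmem : y ∈ {d' : Fin l → ℝ | ∀ d'' ∈ K, d' ⬝ᵥ d'' ≤ 0} := by
            intro d'' hd''
            exact absurd ⟨d'', hd''⟩ hKne
          simpa using h2 y hmem hy
      have := hMinv.inv
      rwa [Matrix.nonsing_inv_nonsing_inv M hinv] at this
end

section
/- Let Ω be a nonempty closed convex subset of a finite-dimensional real inner product space E, let u ∈ Ω and v ∈ N_Ω(u). Then p ∈ D*N_Ω(u,v)(q) if and only if −q ∈ D*Π_Ω(u+v)(−q−p), where N_Ω is regarded as the set-valued map u ↦ N_Ω(u) and Π_Ω is the (single-valued) Euclidean metric projection onto Ω. -/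
open scoped RealInnerProductSpace Topology
open Filter Set

noncomputable section

variable {G : Type*} [NormedAddCommGroup G] [InnerProductSpace ℝ G]

/-- The regular (Fréchet) normal cone to `Ω` at `u`:
`p ∈ N̂_Ω(u)` iff `limsup_{u'→u, u'∈Ω} ⟪p, u'-u⟫/‖u'-u‖ ≤ 0`. -/
def regNormalCone (Ω : Set G) (u : G) : Set G :=
  {p | ∀ ε : ℝ, 0 < ε → ∃ δ : ℝ, 0 < δ ∧
    ∀ u' ∈ Ω, ‖u' - u‖ < δ → ⟪p, u' - u⟫ ≤ ε * ‖u' - u‖}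

/-- The limiting (Mordukhovich) normal cone to `Ω` at `u`. -/
def limNormalCone (Ω : Set G) (u : G) : Set G :=
  {p | ∃ uk pk : ℕ → G, (∀ k, uk k ∈ Ω) ∧ (∀ k, pk k ∈ regNormalCone Ω (uk k)) ∧
      Tendsto uk atTop (𝓝 u) ∧ Tendsto pk atTop (𝓝 p)}

/-- The normal cone of convex analysis to `Ω` at `u` (empty when `u ∉ Ω`). -/
def convNormalCone (Ω : Set G) (u : G) : Set G :=
  {p | u ∈ Ω ∧ ∀ u' ∈ Ω, ⟪p, u' - u⟫ ≤ 0}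

variable {F : Type*} [NormedAddCommGroup F] [InnerProductSpace ℝ F]

/-- The graph of a set-valued map, as a subset of the `L²` product space. -/
def svGraph (Ψ : G → Set F) : Set (WithLp 2 (G × F)) :=
  {z | (WithLp.equiv 2 (G × F) z).2 ∈ Ψ (WithLp.equiv 2 (G × F) z).1}

/-- The limiting coderivative `D*Ψ(u,v)(q)` of a set-valued map `Ψ`. -/
def coderiv (Ψ : G → Set F) (u : G) (v : F) (q : F) : Set G :=
  {p | (WithLp.equiv 2 (G × F)).symm (p, -q) ∈
        limNormalCone (svGraph Ψ) ((WithLp.equiv 2 (G × F)).symm (u, v))}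

/-- The limiting coderivative `D*f(u)(q)` of a single-valued map `f`. -/
def coderivFun (f : G → F) (u : G) (q : F) : Set G :=
  coderiv (fun x => {f x}) u (f u) q

open Classical in
/-- The Euclidean metric projection onto `Ω` (junk value if no nearest point exists). -/
def metricProj (Ω : Set G) (z : G) : G :=
  if h : ∃ w ∈ Ω, ∀ w' ∈ Ω, ‖z - w‖ ≤ ‖z - w'‖ then h.choose else 0

-- transfer lemmas
section Transfer
variable {H : Type*} [NormedAddCommGroup H] [InnerProductSpace ℝ H]

lemma reg_mono (S : Set H) (A B : H ≃ₗ[ℝ] H)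
    (hadj : ∀ x y : H, ⟪A x, y⟫ = ⟪x, B y⟫) {C : ℝ} (hC : 0 < C)
    (hup : ∀ x : H, ‖A x‖ ≤ C * ‖x‖) (x w : H)
    (h : w ∈ regNormalCone (A '' S) (A x)) : B w ∈ regNormalCone S x := by
  intro ε hε
  obtain ⟨δ, hδ, hd⟩ := h (ε / C) (div_pos hε hC)
  refine ⟨δ / C, div_pos hδ hC, fun x' hx' hlt => ?_⟩
  have h2 : ‖A x' - A x‖ ≤ C * ‖x' - x‖ := by rw [← map_sub]; exact hup _
  have h3 : ‖A x' - A x‖ < δ := by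
    refine h2.trans_lt ?_
    calc C * ‖x' - x‖ < C * (δ / C) := by exact mul_lt_mul_of_pos_left hlt hC
      _ = δ := by field_simp
  have h4 := hd (A x') ⟨x', hx', rfl⟩ h3
  have h1 : ⟪B w, x' - x⟫ = ⟪w, A x' - A x⟫ := by
    rw [real_inner_comm, ← map_sub, ← hadj, real_inner_comm]
  calc ⟪B w, x' - x⟫ = ⟪w, A x' - A x⟫ := h1
    _ ≤ ε / C * ‖A x' - A x‖ := h4
    _ ≤ ε / C * (C * ‖x' - x‖) := by
        apply mul_le_mul_of_nonneg_left h2 (le_of_lt (div_pos hε hC))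
    _ = ε * ‖x' - x‖ := by field_simp

lemma adj_symm (A B : H ≃ₗ[ℝ] H) (hadj : ∀ x y : H, ⟪A x, y⟫ = ⟪x, B y⟫) :
    ∀ x y : H, ⟪A.symm x, y⟫ = ⟪x, B.symm y⟫ := by
  intro x y
  have := hadj (A.symm x) (B.symm y)
  simpa using this.symm

lemma symm_image (A : H ≃ₗ[ℝ] H) (S : Set H) : A.symm '' (A '' S) = S := by
  rw [Set.image_image]; simp

lemma reg_iff (S : Set H) (A B : H ≃ₗ[ℝ] H)
    (hadj : ∀ x y : H, ⟪A x, y⟫ = ⟪x, B y⟫) {C : ℝ} (hC : 0 < C)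
    (hup : ∀ x : H, ‖A x‖ ≤ C * ‖x‖) (hup' : ∀ x : H, ‖A.symm x‖ ≤ C * ‖x‖) (x w : H) :
    w ∈ regNormalCone (A '' S) (A x) ↔ B w ∈ regNormalCone S x := by
  constructor
  · exact reg_mono S A B hadj hC hup x w
  · intro h
    have := reg_mono (A '' S) A.symm B.symm (adj_symm A B hadj) hC hup' (A x) (B w)
    rw [symm_image, A.symm_apply_apply, B.symm_apply_apply] at this
    exact this h

lemma lim_mono [FiniteDimensional ℝ H] (S : Set H) (A B : H ≃ₗ[ℝ] H)
    (hadj : ∀ x y : H, ⟪A x, y⟫ = ⟪x, B y⟫) {C : ℝ} (hC : 0 < C)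
    (hup : ∀ x : H, ‖A x‖ ≤ C * ‖x‖) (hup' : ∀ x : H, ‖A.symm x‖ ≤ C * ‖x‖) (x w : H)
    (h : w ∈ limNormalCone (A '' S) (A x)) : B w ∈ limNormalCone S x := by
  obtain ⟨zk, wk, hzS, hreg, hz, hw⟩ := h
  refine ⟨fun k => A.symm (zk k), fun k => B (wk k), fun k => ?_, fun k => ?_, ?_, ?_⟩
  · obtain ⟨s, hs, hse⟩ := hzS k
    show A.symm (zk k) ∈ S
    rw [← hse, A.symm_apply_apply]; exact hs
  · have : wk k ∈ regNormalCone (A '' S) (A (A.symm (zk k))) := by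
      rw [A.apply_symm_apply]; exact hreg k
    exact (reg_iff S A B hadj hC hup hup' _ _).1 this
  · have hc : Continuous A.symm := A.symm.toLinearMap.continuous_of_finiteDimensional
    have := (hc.tendsto (A x)).comp hz
    simpa [Function.comp_def] using this
  · have hc : Continuous B := B.toLinearMap.continuous_of_finiteDimensional
    exact (hc.tendsto w).comp hw

lemma lim_iff [FiniteDimensional ℝ H] (S : Set H) (A B : H ≃ₗ[ℝ] H)
    (hadj : ∀ x y : H, ⟪A x, y⟫ = ⟪x, B y⟫) {C : ℝ} (hC : 0 < C)
    (hup : ∀ x : H, ‖A x‖ ≤ C * ‖x‖) (hup' : ∀ x : H, ‖A.symm x‖ ≤ C * ‖x‖) (x w : H) :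
    w ∈ limNormalCone (A '' S) (A x) ↔ B w ∈ limNormalCone S x := by
  constructor
  · exact lim_mono S A B hadj hC hup hup' x w
  · intro h
    have hup'' : ∀ x : H, ‖A.symm.symm x‖ ≤ C * ‖x‖ := by simpa using hup
    have := lim_mono (A '' S) A.symm B.symm (adj_symm A B hadj) hC hup' hup'' (A x) (B w)
    rw [symm_image, A.symm_apply_apply, B.symm_apply_apply] at this
    exact this h

end Transfer



-- projection lemmas
section Proj
variable {E : Type*} [NormedAddCommGroup E] [InnerProductSpace ℝ E] [FiniteDimensional ℝ E]
variable {Ω : Set E}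

lemma metricProj_spec (hne : Ω.Nonempty) (hclosed : IsClosed Ω) (z : E) :
    metricProj Ω z ∈ Ω ∧ ∀ w' ∈ Ω, ‖z - metricProj Ω z‖ ≤ ‖z - w'‖ := by
  have hex : ∃ w ∈ Ω, ∀ w' ∈ Ω, ‖z - w‖ ≤ ‖z - w'‖ := by
    obtain ⟨w, hw, hd⟩ := hclosed.exists_infDist_eq_dist hne z
    refine ⟨w, hw, fun w' hw' => ?_⟩
    rw [← dist_eq_norm, ← dist_eq_norm, ← hd]
    exact Metric.infDist_le_dist_of_mem hw'
  rw [metricProj, dif_pos hex]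
  exact hex.choose_spec

lemma metricProj_inner (hne : Ω.Nonempty) (hclosed : IsClosed Ω) (hconvex : Convex ℝ Ω)
    (z : E) : ∀ w' ∈ Ω, ⟪z - metricProj Ω z, w' - metricProj Ω z⟫ ≤ 0 := by
  obtain ⟨hmem, hmin⟩ := metricProj_spec hne hclosed z
  haveI : Nonempty Ω := hne.to_subtype
  have heq : ‖z - metricProj Ω z‖ = ⨅ w : Ω, ‖z - w‖ := by
    refine le_antisymm (le_ciInf fun w => hmin w w.2) ?_
    have hbdd : BddBelow (Set.range fun w : Ω => ‖z - w‖) := by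
      refine ⟨0, ?_⟩
      rintro _ ⟨w, rfl⟩
      positivity
    exact ciInf_le hbdd ⟨_, hmem⟩
  exact (norm_eq_iInf_iff_real_inner_le_zero hconvex hmem).1 heq

lemma metricProj_eq_of (hne : Ω.Nonempty) (hclosed : IsClosed Ω) (hconvex : Convex ℝ Ω)
    {z w : E} (hw : w ∈ Ω) (h : ∀ w' ∈ Ω, ⟪z - w, w' - w⟫ ≤ 0) :
    metricProj Ω z = w := by
  set m := metricProj Ω z with hm
  obtain ⟨hmem, -⟩ := metricProj_spec hne hclosed z
  have h1 : ⟪z - m, w - m⟫ ≤ 0 := metricProj_inner hne hclosed hconvex z w hw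
  have h2 : ⟪z - w, m - w⟫ ≤ 0 := h m hmem
  have key : ⟪w - m, w - m⟫ ≤ 0 := by
    have e1 : ⟪z - m, w - m⟫ - ⟪z - w, w - m⟫ = ⟪w - m, w - m⟫ := by
      rw [← inner_sub_left]
      congr 1
      abel
    have e2 : ⟪z - w, w - m⟫ = -⟪z - w, m - w⟫ := by
      rw [← inner_neg_right]
      congr 1
      abel
    nlinarith [h1, h2, e1, e2]
  have : w - m = 0 := real_inner_self_nonpos.1 key
  rw [sub_eq_zero] at this
  exact this.symm

lemma mem_convNormalCone_iff_proj (hne : Ω.Nonempty) (hclosed : IsClosed Ω)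
    (hconvex : Convex ℝ Ω) {u v : E} :
    v ∈ convNormalCone Ω u ↔ metricProj Ω (u + v) = u := by
  constructor
  · intro ⟨hu, hv⟩
    refine metricProj_eq_of hne hclosed hconvex hu fun w' hw' => ?_
    simpa using hv w' hw'
  · intro h
    obtain ⟨hmem, -⟩ := metricProj_spec hne hclosed (u + v)
    rw [h] at hmem
    refine ⟨hmem, fun w' hw' => ?_⟩
    have := metricProj_inner hne hclosed hconvex (u + v) w' hw'
    rwa [h, add_sub_cancel_left] at this

end Proj


-- the concrete swap map
section Concrete
variable (E : Type*) [NormedAddCommGroup E] [InnerProductSpace ℝ E]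

/-- The linear equivalence `(u,v) ↦ (u+v,u)` on `E × E`. -/
def swapL : (E × E) ≃ₗ[ℝ] E × E where
  toFun x := (x.1 + x.2, x.1)
  invFun z := (z.2, z.1 - z.2)
  map_add' x y := by
    ext <;> simp <;> abel
  map_smul' c x := by
    ext <;> simp
  left_inv x := by simp
  right_inv z := by simp

/-- The same map on the `L²` product. -/
def Amap : WithLp 2 (E × E) ≃ₗ[ℝ] WithLp 2 (E × E) :=
  (WithLp.linearEquiv 2 ℝ (E × E)).trans ((swapL E).trans (WithLp.linearEquiv 2 ℝ (E × E)).symm)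

variable {E}

lemma Amap_apply (x : WithLp 2 (E × E)) :
    Amap E x = (WithLp.equiv 2 (E × E)).symm (x.fst + x.snd, x.fst) := rfl

lemma Amap_fst (x : WithLp 2 (E × E)) : (Amap E x).fst = x.fst + x.snd := rfl

lemma Amap_snd (x : WithLp 2 (E × E)) : (Amap E x).snd = x.fst := rfl

lemma Amap_symm_apply (z : WithLp 2 (E × E)) :
    (Amap E).symm z = (WithLp.equiv 2 (E × E)).symm (z.snd, z.fst - z.snd) := rfl

lemma Amap_adj (x y : WithLp 2 (E × E)) : ⟪Amap E x, y⟫ = ⟪x, Amap E y⟫ := by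
  simp only [WithLp.prod_inner_apply, WithLp.ofLp_fst, WithLp.ofLp_snd, Amap_fst, Amap_snd, inner_add_left, inner_add_right]
  ring

lemma sqrt_ineq {a b : ℝ} (ha : 0 ≤ a) (hb : 0 ≤ b) (h : a ^ 2 ≤ (2 * b) ^ 2) : a ≤ 2 * b := by
  nlinarith

lemma Amap_norm (x : WithLp 2 (E × E)) : ‖Amap E x‖ ≤ 2 * ‖x‖ := by
  refine sqrt_ineq (norm_nonneg _) (norm_nonneg _) ?_
  have h1 := WithLp.prod_norm_sq_eq_of_L2 (Amap E x)
  have h2 := WithLp.prod_norm_sq_eq_of_L2 x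
  rw [Amap_fst, Amap_snd] at h1
  have h3 : ‖x.fst + x.snd‖ ≤ ‖x.fst‖ + ‖x.snd‖ := norm_add_le _ _
  have h4 : ‖x.fst + x.snd‖ ^ 2 ≤ (‖x.fst‖ + ‖x.snd‖) ^ 2 :=
    pow_le_pow_left₀ (norm_nonneg _) h3 2
  nlinarith [sq_nonneg (‖x.fst‖ - ‖x.snd‖), norm_nonneg x.fst, norm_nonneg x.snd]

lemma Amap_symm_norm (z : WithLp 2 (E × E)) : ‖(Amap E).symm z‖ ≤ 2 * ‖z‖ := by
  refine sqrt_ineq (norm_nonneg _) (norm_nonneg _) ?_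
  have h1 := WithLp.prod_norm_sq_eq_of_L2 ((Amap E).symm z)
  have h2 := WithLp.prod_norm_sq_eq_of_L2 z
  have e1 : ((Amap E).symm z).fst = z.snd := rfl
  have e2 : ((Amap E).symm z).snd = z.fst - z.snd := rfl
  rw [e1, e2] at h1
  have h3 : ‖z.fst - z.snd‖ ≤ ‖z.fst‖ + ‖z.snd‖ := norm_sub_le _ _
  have h4 : ‖z.fst - z.snd‖ ^ 2 ≤ (‖z.fst‖ + ‖z.snd‖) ^ 2 :=
    pow_le_pow_left₀ (norm_nonneg _) h3 2
  nlinarith [sq_nonneg (‖z.fst‖ - ‖z.snd‖), norm_nonneg z.fst, norm_nonneg z.snd]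

end Concrete


section Graph
variable {E : Type*} [NormedAddCommGroup E] [InnerProductSpace ℝ E] [FiniteDimensional ℝ E]
variable {Ω : Set E}

lemma graph_eq (hne : Ω.Nonempty) (hclosed : IsClosed Ω) (hconvex : Convex ℝ Ω) :
    svGraph (fun x : E => {metricProj Ω x}) =
      Amap E '' svGraph (fun x => convNormalCone Ω x) := by
  ext z
  simp only [svGraph, mem_setOf_eq, mem_singleton_iff, mem_image, WithLp.equiv_apply, WithLp.ofLp_fst,
    WithLp.ofLp_snd]
  constructor
  · intro h
    refine ⟨(WithLp.equiv 2 (E × E)).symm (z.snd, z.fst - z.snd), ?_, ?_⟩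
    · show z.fst - z.snd ∈ convNormalCone Ω z.snd
      refine ⟨by rw [h]; exact (metricProj_spec hne hclosed z.fst).1, fun w' hw' => ?_⟩
      have := metricProj_inner hne hclosed hconvex z.fst w' hw'
      rwa [← h] at this
    · rw [Amap_apply]
      show (WithLp.equiv 2 (E × E)).symm (z.snd + (z.fst - z.snd), z.snd) = z
      have e : (z.snd + (z.fst - z.snd), z.snd) = WithLp.equiv 2 (E × E) z := by
        apply Prod.ext
        · simp
        · simp
      rw [e, Equiv.symm_apply_apply]
  · rintro ⟨x, hx, rfl⟩
    have hx' : x.snd ∈ convNormalCone Ω x.fst := hx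
    rw [Amap_fst, Amap_snd]
    exact ((mem_convNormalCone_iff_proj hne hclosed hconvex).1 hx').symm

end Graph

/-- Coderivative exchange between the normal-cone map and the projection.
For a nonempty closed convex set `Ω` in a finite-dimensional real inner product space,
`u ∈ Ω` and `v ∈ N_Ω(u)`, one has `p ∈ D*N_Ω(u,v)(q)` iff `−q ∈ D*Π_Ω(u+v)(−q−p)`. -/
theorem mem_coderiv_normalCone_iff_mem_coderiv_proj
    {E : Type*} [NormedAddCommGroup E] [InnerProductSpace ℝ E] [FiniteDimensional ℝ E]
    (Ω : Set E) (hne : Ω.Nonempty) (hclosed : IsClosed Ω) (hconvex : Convex ℝ Ω)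
    (u : E) (hu : u ∈ Ω) (v : E) (hv : v ∈ convNormalCone Ω u) (p q : E) :
    p ∈ coderiv (fun x => convNormalCone Ω x) u v q ↔
      -q ∈ coderivFun (metricProj Ω) (u + v) (-q - p) := by
  haveI : FiniteDimensional ℝ (WithLp 2 (E × E)) :=
    (WithLp.linearEquiv 2 ℝ (E × E)).symm.finiteDimensional
  have hproj : metricProj Ω (u + v) = u :=
    (mem_convNormalCone_iff_proj hne hclosed hconvex).1 hv
  have hng : -(-q - p) = q + p := by abel
  simp only [coderiv, coderivFun, mem_setOf_eq, hproj, hng]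
  rw [graph_eq hne hclosed hconvex]
  have e1 : (WithLp.equiv 2 (E × E)).symm (u + v, u) =
      Amap E ((WithLp.equiv 2 (E × E)).symm (u, v)) := rfl
  rw [e1, lim_iff (svGraph fun x => convNormalCone Ω x) (Amap E) (Amap E) Amap_adj two_pos
    Amap_norm Amap_symm_norm]
  have e2 : Amap E ((WithLp.equiv 2 (E × E)).symm (-q, q + p)) =
      (WithLp.equiv 2 (E × E)).symm (p, -q) := by
    rw [Amap_apply]
    congr 1
    apply Prod.ext
    · simp
    · simp
  rw [e2]
end
end
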